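/- arXiv:1906.05457 — 3 statements merged into one kernel-verified Lean document; each statement's English description precedes it below -/
import Mathlib

section
/- Let U : (0,∞) → (0,∞) be continuous, strictly decreasing, with U(ε) → +∞ as ε → 0⁺, such that 1/U is convex, and suppose U is bijective onto its range. Then for every constant C > 0 the pricing function Π(v) = C·U⁻¹(v), defined on the range of U, is arbitrage-free: for all v and v_1,...,v_m in the range of U and reals a_1,...,a_m with Σ a_j = 1 and Σ a_j² v_j ≤ v, Π(v) ≤ Σ_j Π(v_j). -/
open Set Filter Finset

/-!
Convexity of `1 / U` together with `1 / U → 0` at `0⁺` makes `ε ↦ (1 / U ε) / ε` nondecreasing,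
so `1 / U` is superadditive: `∑ 1 / U (ε_j) ≤ 1 / U (∑ ε_j)`. If `v_j = U ε_j` and `v = U ε`, the
Cauchy–Schwarz (Sedrakyan) inequality with `∑ a_j = 1` gives
`U (∑ ε_j) ≤ (∑ 1 / U ε_j)⁻¹ ≤ ∑ a_j² U ε_j ≤ U ε`, and since `U` is decreasing, `ε ≤ ∑ ε_j`.
-/

theorem ConvexOn.monotoneOn_div_self_of_tendsto_zero {f : ℝ → ℝ}
    (hf : ConvexOn ℝ (Ioi 0) f) (hf0 : Tendsto f (nhdsWithin 0 (Ioi 0)) (nhds 0)) :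
    MonotoneOn (fun x => f x / x) (Ioi 0) := by
  intro x hx y hy hxy
  have hsecant : ∀ z ∈ Ioi (0 : ℝ),
      Tendsto (fun δ => (f z - f δ) / (z - δ)) (nhdsWithin 0 (Ioi 0)) (nhds (f z / z)) :=
    fun z hz => by
      have h : Tendsto (fun δ => (f z - f δ) / (z - δ)) (nhdsWithin 0 (Ioi 0))
          (nhds ((f z - 0) / (z - 0))) :=
        (tendsto_const_nhds.sub hf0).div (tendsto_const_nhds.sub nhdsWithin_le_nhds)
          (sub_ne_zero.2 (ne_of_gt hz))
      rwa [sub_zero, sub_zero] at h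
  refine le_of_tendsto_of_tendsto (hsecant x hx) (hsecant y hy) ?_
  filter_upwards [Ioo_mem_nhdsGT (show (0 : ℝ) < x from hx)] with δ hδ
  exact hf.secant_mono hδ.1 hx hy hδ.2.ne' (hδ.2.trans_le hxy).ne' hxy

theorem sum_apply_le_apply_sum_of_monotoneOn_div_self {ι : Type*} {f : ℝ → ℝ}
    (hf : MonotoneOn (fun x => f x / x) (Ioi 0)) {s : Finset ι} (hs : s.Nonempty)
    {e : ι → ℝ} (he : ∀ j ∈ s, 0 < e j) :
    ∑ j ∈ s, f (e j) ≤ f (∑ j ∈ s, e j) := by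
  set S := ∑ j ∈ s, e j
  have hS : 0 < S := sum_pos he hs
  calc ∑ j ∈ s, f (e j) = ∑ j ∈ s, e j * (f (e j) / e j) :=
        sum_congr rfl fun j hj => (mul_div_cancel₀ _ (he j hj).ne').symm
    _ ≤ ∑ j ∈ s, e j * (f S / S) := by
        refine sum_le_sum fun j hj => mul_le_mul_of_nonneg_left ?_ (he j hj).le
        exact hf (he j hj) hS (single_le_sum (fun i hi => (he i hi).le) hj)
    _ = f S := by rw [← sum_mul, mul_div_cancel₀ _ hS.ne']

theorem inv_sum_inv_le_sum_sq_mul {ι : Type*} (s : Finset ι) {a w : ι → ℝ}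
    (ha : ∑ j ∈ s, a j = 1) (hw : ∀ j ∈ s, 0 < w j) :
    (∑ j ∈ s, (w j)⁻¹)⁻¹ ≤ ∑ j ∈ s, a j ^ 2 * w j := by
  simpa [ha, div_eq_mul_inv] using
    sq_sum_div_le_sum_sq_div s a (fun j hj => inv_pos.2 (hw j hj))

theorem inverse_utility_pricing_arbitrageFree_general (U : ℝ → ℝ)
    (hanti : StrictAntiOn U (Ioi 0))
    (hpos : ∀ ε ∈ Ioi (0 : ℝ), 0 < U ε)
    (hlim : Tendsto U (nhdsWithin 0 (Ioi 0)) atTop)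
    (hconv : ConvexOn ℝ (Ioi 0) (fun ε => 1 / U ε))
    (C : ℝ) (hC : 0 < C) :
    ∀ (m : ℕ) (v : ℝ) (vs a : Fin m → ℝ),
      v ∈ U '' Ioi 0 → (∀ j, vs j ∈ U '' Ioi 0) →
      (∑ j, a j) = 1 → (∑ j, (a j) ^ 2 * vs j) ≤ v →
      C * Function.invFunOn U (Ioi 0) v ≤ ∑ j, C * Function.invFunOn U (Ioi 0) (vs j) := by
  rintro m _ vs a ⟨ε, hε, rfl⟩ hvs hsum hle
  choose e he hev using hvs
  obtain rfl : vs = fun j => U (e j) := funext fun j => (hev j).symm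
  have hinv := hanti.injOn.leftInvOn_invFunOn
  simp only [hinv hε, hinv (he _), ← mul_sum]
  refine mul_le_mul_of_nonneg_left ?_ hC.le
  have hne : (univ : Finset (Fin m)).Nonempty := univ_nonempty_iff.2 <| by
    by_contra h
    simp [not_nonempty_iff.1 h] at hsum
  have hsum_pos : 0 < ∑ j, e j := sum_pos (fun j _ => he j) hne
  have hinv_lim : Tendsto (fun ε => 1 / U ε) (nhdsWithin 0 (Ioi 0)) (nhds 0) := by
    simp only [one_div]
    exact hlim.inv_tendsto_atTop
  have hsuper : ∑ j, 1 / U (e j) ≤ 1 / U (∑ j, e j) :=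
    sum_apply_le_apply_sum_of_monotoneOn_div_self
      (hconv.monotoneOn_div_self_of_tendsto_zero hinv_lim) hne fun j _ => he j
  refine (hanti.le_iff_ge hsum_pos hε).1 ?_
  calc U (∑ j, e j) ≤ (∑ j, (U (e j))⁻¹)⁻¹ := by
        rw [le_inv_comm₀ (hpos _ hsum_pos) (sum_pos (fun j _ => inv_pos.2 (hpos _ (he j))) hne)]
        simpa using hsuper
    _ ≤ ∑ j, a j ^ 2 * U (e j) := inv_sum_inv_le_sum_sq_mul _ hsum fun j _ => hpos _ (he j)
    _ ≤ U ε := hle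

theorem inverse_utility_pricing_arbitrageFree (U : ℝ → ℝ)
    (hcont : ContinuousOn U (Ioi 0))
    (hanti : StrictAntiOn U (Ioi 0))
    (hpos : ∀ ε ∈ Ioi (0 : ℝ), 0 < U ε)
    (hlim : Tendsto U (nhdsWithin 0 (Ioi 0)) atTop)
    (hconv : ConvexOn ℝ (Ioi 0) (fun ε => 1 / U ε))
    (hbij : InjOn U (Ioi 0))
    (C : ℝ) (hC : 0 < C) :
    ∀ (m : ℕ) (v : ℝ) (vs a : Fin m → ℝ),
      v ∈ U '' Ioi 0 → (∀ j, vs j ∈ U '' Ioi 0) →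
      (∑ j, a j) = 1 → (∑ j, (a j) ^ 2 * vs j) ≤ v →
      C * Function.invFunOn U (Ioi 0) v ≤ ∑ j, C * Function.invFunOn U (Ioi 0) (vs j) :=
  inverse_utility_pricing_arbitrageFree_general U hanti hpos hlim hconv C hC
end

section
/- Privacy amplification by sampling: let M be a mechanism satisfying ε-differential privacy, and let S be the mechanism that first includes each data point independently with probability β ∈ (0,1] (replacing unincluded points so databases remain comparable) and then runs M on the sampled database. Then for any two databases D, D' differing in one user's data point and any output o, Pr[S(D) = o] ≤ e^{ε'}·Pr[S(D') = o] where ε' = ln(1 + β(e^{ε} − 1)). In particular, choosing β_i = (e^{ε_i} − 1)/(e^{ε_max} − 1) for user u_i and running an ε_max-DP mechanism gives user u_i privacy loss exactly ε_i. -/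
open Finset

/-- `M` satisfies `ε`-differential privacy (neighboring databases differ in at most
one user's data point, via replacement). -/
def SatisfiesDP {User Data O : Type*} (M : (User → Data) → PMF O) (ε : ℝ) : Prop :=
  ∀ (i : User) (D D' : User → Data), (∀ j, j ≠ i → D j = D' j) →
    ∀ o : O, M D o ≤ ENNReal.ofReal (Real.exp ε) * M D' o

/-- Output distribution (as a function assigning probabilities to outputs) of the
sampled mechanism: each data point is included independently with probability `β`,
unincluded points are replaced by the corresponding point of a fixed default
database `D₀` (so that databases remain comparable), and then `M` is run. -/
noncomputable def sampleMech {User Data O : Type*} [Fintype User] [DecidableEq User]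
    (M : (User → Data) → PMF O) (β : ℝ) (D₀ : User → Data)
    (D : User → Data) (o : O) : ENNReal :=
  ∑ b : User → Bool,
    (∏ j, if b j then ENNReal.ofReal β else ENNReal.ofReal (1 - β)) *
      M (fun j => if b j then D j else D₀ j) o

/-! Let `D`, `D'` differ only at user `i`, and condition on the sampling decisions of all
other users. Then `S(D)` is the mixture `β T + (1 - β) U`: `T` runs `M` with `D i` included,
`U` with it replaced by `D₀ i`, so `U` is the same for `D'`, and `ε`-DP of `M` gives
`T ≤ e^ε T'` and `T ≤ e^ε U`. Writing `e^ε = c + (1 - β)(e^ε - 1)` with `c = 1 + β(e^ε - 1)`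
and charging the first part to `T'`, the second to `U`, yields
`β T + (1 - β) U ≤ c (β T' + (1 - β) U)`. -/

section FunSplitAt

variable {ι α R : Type*} [Fintype ι] [DecidableEq ι] [Fintype α] [CommSemiring R]

theorem sum_prod_mul_eq_sum_funSplitAt (i : ι) (w : α → R) (f : (ι → α) → R) :
    ∑ b, (∏ j, w (b j)) * f b =
      ∑ c : {j // j ≠ i} → α, (∏ j, w (c j)) *
        ∑ v, w v * f ((Equiv.funSplitAt i α).symm (v, c)) := by
  rw [← (Equiv.funSplitAt i α).symm.sum_comp, Fintype.sum_prod_type, Finset.sum_comm]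
  refine sum_congr rfl fun c _ => ?_
  rw [mul_sum]
  refine sum_congr rfl fun v _ => ?_
  rw [Fintype.prod_eq_mul_prod_subtype_ne _ i]
  have hc : ∀ j : {j // j ≠ i}, (Equiv.funSplitAt i α).symm (v, c) j = c j := fun j => by
    simp [Equiv.funSplitAt_symm_apply, j.2]
  simp only [hc, Equiv.funSplitAt_symm_apply, dite_true]
  ring

end FunSplitAt

namespace ENNReal

theorem mixture_le_of_le_mul {β e : ℝ} (hβ0 : 0 ≤ β) (hβ1 : β ≤ 1) (he : 1 ≤ e)
    {T T' U : ℝ≥0∞} (hT' : T ≤ ENNReal.ofReal e * T') (hU : T ≤ ENNReal.ofReal e * U) :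
    ENNReal.ofReal β * T + ENNReal.ofReal (1 - β) * U ≤
      ENNReal.ofReal (1 + β * (e - 1)) *
        (ENNReal.ofReal β * T' + ENNReal.ofReal (1 - β) * U) := by
  have hc : 0 ≤ 1 + β * (e - 1) := by nlinarith
  have hd : 0 ≤ (1 - β) * (e - 1) := mul_nonneg (sub_nonneg.2 hβ1) (sub_nonneg.2 he)
  have hweights : ENNReal.ofReal β * ENNReal.ofReal ((1 - β) * (e - 1)) + ENNReal.ofReal (1 - β) =
      ENNReal.ofReal (1 + β * (e - 1)) * ENNReal.ofReal (1 - β) := by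
    rw [← ofReal_mul hβ0, ← ofReal_mul hc, ← ofReal_add (mul_nonneg hβ0 hd) (by linarith)]
    ring_nf
  set p := ENNReal.ofReal β
  set q := ENNReal.ofReal (1 - β)
  set c := ENNReal.ofReal (1 + β * (e - 1))
  set d := ENNReal.ofReal ((1 - β) * (e - 1))
  have hT : T ≤ c * T' + d * U := calc
    T ≤ ENNReal.ofReal e * min T' U := by rcases min_cases T' U with ⟨h, -⟩ | ⟨h, -⟩ <;> rwa [h]
    _ = c * min T' U + d * min T' U := by rw [← add_mul, ← ofReal_add hc hd]; ring_nf
    _ ≤ c * T' + d * U := by gcongr <;> simp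
  calc p * T + q * U
      ≤ p * (c * T' + d * U) + q * U := by gcongr
    _ = p * c * T' + (p * d + q) * U := by ring
    _ = c * (p * T' + q * U) := by rw [hweights]; ring

end ENNReal

theorem Real.log_one_add_div_exp_sub_one_mul (x : ℝ) {y : ℝ} (hy : y ≠ 0) :
    Real.log (1 + (Real.exp x - 1) / (Real.exp y - 1) * (Real.exp y - 1)) = x := by
  rw [div_mul_cancel₀ _ (sub_ne_zero.2 (mt (Real.exp_eq_one_iff y).1 hy)), add_sub_cancel,
    Real.log_exp]

section Sampling

variable {User Data O : Type*}

def sampledDB (D₀ D : User → Data) (b : User → Bool) : User → Data :=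
  fun j => if b j then D j else D₀ j

theorem sampledDB_eq_of_apply_eq_false {i : User} {D₀ D D' : User → Data} {b : User → Bool}
    (hb : b i = false) (hD : ∀ j, j ≠ i → D j = D' j) :
    sampledDB D₀ D b = sampledDB D₀ D' b := by
  funext j
  by_cases hj : j = i
  · simp [sampledDB, hj, hb]
  · simp [sampledDB, hD j hj]

theorem SatisfiesDP.apply_sampledDB_le {M : (User → Data) → PMF O} {ε : ℝ}
    (hM : SatisfiesDP M ε) {i : User} {D₀ D D' : User → Data} {b b' : User → Bool}
    (hD : ∀ j, j ≠ i → D j = D' j) (hb : ∀ j, j ≠ i → b j = b' j) (o : O) :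
    M (sampledDB D₀ D b) o ≤ ENNReal.ofReal (Real.exp ε) * M (sampledDB D₀ D' b') o :=
  hM i _ _ (fun j hj => by simp [sampledDB, hD j hj, hb j hj]) o

variable [Fintype User] [DecidableEq User]

theorem sampleMech_eq_sum_funSplitAt (M : (User → Data) → PMF O) (β : ℝ)
    (D₀ D : User → Data) (i : User) (o : O) :
    sampleMech M β D₀ D o = ∑ c : {j // j ≠ i} → Bool,
      (∏ j, if c j then ENNReal.ofReal β else ENNReal.ofReal (1 - β)) *
        (ENNReal.ofReal β * M (sampledDB D₀ D ((Equiv.funSplitAt i Bool).symm (true, c))) o +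
          ENNReal.ofReal (1 - β) *
            M (sampledDB D₀ D ((Equiv.funSplitAt i Bool).symm (false, c))) o) := by
  refine (sum_prod_mul_eq_sum_funSplitAt i
    (fun v => if v then ENNReal.ofReal β else ENNReal.ofReal (1 - β))
    (fun b => M (sampledDB D₀ D b) o)).trans ?_
  simp only [Fintype.sum_bool, if_true, Bool.false_eq_true, if_false]

end Sampling

theorem privacy_amplification_by_sampling {User Data O : Type*}
    [Fintype User] [DecidableEq User]
    (M : (User → Data) → PMF O) (ε : ℝ) (hε : 0 < ε) (hM : SatisfiesDP M ε)
    (β : ℝ) (hβ0 : 0 < β) (hβ1 : β ≤ 1) (D₀ : User → Data) :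
    (∀ (i : User) (D D' : User → Data), (∀ j, j ≠ i → D j = D' j) →
        ∀ o : O, sampleMech M β D₀ D o ≤
          ENNReal.ofReal (Real.exp (Real.log (1 + β * (Real.exp ε - 1)))) *
            sampleMech M β D₀ D' o) ∧
    (∀ εi εmax : ℝ, 0 < εi → εi ≤ εmax →
        Real.log (1 + (Real.exp εi - 1) / (Real.exp εmax - 1) * (Real.exp εmax - 1)) = εi) := by
  have he : 1 ≤ Real.exp ε := Real.one_le_exp hε.le
  refine ⟨fun i D D' hD o => ?_, fun εi εmax hεi hle =>
    Real.log_one_add_div_exp_sub_one_mul εi (by linarith)⟩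
  rw [Real.exp_log (by nlinarith), sampleMech_eq_sum_funSplitAt M β D₀ D i o,
    sampleMech_eq_sum_funSplitAt M β D₀ D' i o, mul_sum]
  refine sum_le_sum fun c _ => ?_
  have hsplit : ∀ j, j ≠ i → (Equiv.funSplitAt i Bool).symm (true, c) j =
      (Equiv.funSplitAt i Bool).symm (false, c) j := fun j hj => by
    simp [Equiv.funSplitAt_symm_apply, hj]
  rw [sampledDB_eq_of_apply_eq_false (b := (Equiv.funSplitAt i Bool).symm (false, c)) (D' := D')
    (by simp) hD, mul_left_comm]
  gcongr
  exact ENNReal.mixture_le_of_le_mul hβ0.le hβ1 he (hM.apply_sampledDB_le hD (fun _ _ => rfl) o)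
    (hM.apply_sampledDB_le hD hsplit o)
end

section
/- Consider n = 50, pattern ρ = (0.5, 0.5, ..., 0.5, 1) (49 entries equal to 0.5 and one equal to 1), Δ = 2, and the patterned Sample utility U(ε) = 49·x(ε)(1 − x(ε)) + 2(Δ/ε)² where x(ε) = (e^{0.5ε} − 1)/(e^{ε} − 1). Then there exist ε₁ > ε₂ > 0 such that U(ε₂) = 2·U(ε₁) but Σ_i ρ_i·ε₂ < (1/2)·Σ_i ρ_i·ε₁; that is, two copies of the cheaper answer at variance U(ε₂) can be averaged to achieve variance U(ε₁) at strictly less than the price of the answer at variance U(ε₁), so the induced pricing function Π(v) = C·Σ_i ρ_i·U⁻¹(v) (C > 0 constant) is not arbitrage-free. -/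
/-!
Since `e^ε - 1 = (e^{ε/2} - 1)(e^{ε/2} + 1)`, the sampling probability is `x(ε) = 1 / (e^{ε/2} + 1)`,
so `U` is continuous away from `0` and its first term lies in `[0, 49/4]`. Crude bounds on `e` give
`U(1) < 2·U(2) < U(1/2)`, and the intermediate value theorem yields `ε₂ ∈ (1/2, 1)` with
`U(ε₂) = 2·U(2)`. Since `Σ ρ_i = 51/2`, the price at `ε₂` is below `51/2`, half the price at `ε₁ = 2`.
-/

open Finset

noncomputable def xSam (ε : ℝ) : ℝ := (Real.exp (0.5 * ε) - 1) / (Real.exp ε - 1)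

noncomputable def USam (ε : ℝ) : ℝ := 49 * xSam ε * (1 - xSam ε) + 2 * ((2 : ℝ) / ε) ^ 2

noncomputable def ρEx (i : Fin 50) : ℝ := if (i : ℕ) = 49 then 1 else 0.5

lemma xSam_eq_inv {ε : ℝ} (hε : ε ≠ 0) : xSam ε = (Real.exp (ε / 2) + 1)⁻¹ := by
  have hfac : Real.exp ε - 1 = (Real.exp (ε / 2) - 1) * (Real.exp (ε / 2) + 1) := by
    rw [mul_comm, ← mul_self_sub_one, ← Real.exp_add, add_halves]
  have hne : Real.exp (ε / 2) - 1 ≠ 0 :=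
    sub_ne_zero.mpr fun h ↦ hε (by linarith [Real.exp_eq_one_iff _ |>.mp h])
  rw [xSam, hfac, show (0.5 : ℝ) * ε = ε / 2 by ring, div_mul_cancel_left₀ hne]

lemma xSam_mem_Ioo {ε : ℝ} (hε : ε ≠ 0) : xSam ε ∈ Set.Ioo 0 1 := by
  rw [xSam_eq_inv hε]
  exact ⟨by positivity, inv_lt_one_of_one_lt₀ (by linarith [Real.exp_pos (ε / 2)])⟩

lemma mul_one_sub_le_quarter (x : ℝ) : x * (1 - x) ≤ 1 / 4 := by
  nlinarith [sq_nonneg (x - 1 / 2)]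

lemma continuousOn_USam : ContinuousOn USam {0}ᶜ := by
  have hden : ∀ ε ∈ ({0}ᶜ : Set ℝ), Real.exp ε - 1 ≠ 0 := fun ε hε ↦
    sub_ne_zero.mpr fun h ↦ hε (Real.exp_eq_one_iff _ |>.mp h)
  have hx : ContinuousOn xSam {0}ᶜ := ContinuousOn.div (by fun_prop) (by fun_prop) hden
  unfold USam
  exact ((continuousOn_const.mul hx).mul (continuousOn_const.sub hx)).add
    (continuousOn_const.mul ((continuousOn_const.div continuousOn_id fun _ h ↦ h).pow 2))

lemma USam_one_lt_two_mul_USam_two : USam 1 < 2 * USam 2 := by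
  have hy : xSam 2 = (Real.exp 1 + 1)⁻¹ := by rw [xSam_eq_inv two_ne_zero]; norm_num
  -- `2 < e < 3` puts `x(2)` in `(1/4, 1/2)`, where `x (1 - x) > 3/16`
  have hy_gt : 1 / 4 < xSam 2 := by
    rw [hy, one_div]
    exact inv_strictAnti₀ (by positivity) (by linarith [Real.exp_one_lt_three])
  have hy_lt : xSam 2 < 1 / 2 := by
    rw [hy, one_div]
    exact inv_strictAnti₀ (by norm_num) (by linarith [Real.exp_one_gt_two])
  have hz := mul_one_sub_le_quarter (xSam 1)
  norm_num [USam]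
  nlinarith

lemma two_mul_USam_two_lt_USam_half : 2 * USam 2 < USam (1 / 2) := by
  obtain ⟨hx₀, hx₁⟩ := xSam_mem_Ioo (show (1 / 2 : ℝ) ≠ 0 by norm_num)
  have hy := mul_one_sub_le_quarter (xSam 2)
  norm_num [USam]
  nlinarith [mul_pos hx₀ (sub_pos.mpr hx₁)]

lemma sum_ρEx_mul (ε : ℝ) : ∑ i : Fin 50, ρEx i * ε = 51 / 2 * ε := by
  rw [← sum_mul]
  norm_num [ρEx, Fin.sum_univ_succ]

theorem sample_pricing_not_arbitrageFree :
    ∃ ε₁ ε₂ : ℝ, 0 < ε₂ ∧ ε₂ < ε₁ ∧ USam ε₂ = 2 * USam ε₁ ∧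
      (∑ i : Fin 50, ρEx i * ε₂) < (1 / 2) * ∑ i : Fin 50, ρEx i * ε₁ := by
  have hcont : ContinuousOn USam (Set.Icc (1 / 2) 1) :=
    continuousOn_USam.mono fun ε hε ↦ by rintro rfl; norm_num at hε
  obtain ⟨ε₂, ⟨hε₂_gt, hε₂_lt⟩, hUε₂⟩ := intermediate_value_Ioo' (by norm_num) hcont
    ⟨USam_one_lt_two_mul_USam_two, two_mul_USam_two_lt_USam_half⟩
  refine ⟨2, ε₂, by linarith, by linarith, hUε₂, ?_⟩
  rw [sum_ρEx_mul, sum_ρEx_mul]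
  linarith
end
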